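/- Let w be a doubling weight on [-1,1] in the class W(Z), 0 < p < ∞, r ∈ ℕ, and A, t > 0. Then for every f ∈ L^p_w, ω^r_φ(f, A, t)_{p,w} ≤ c ‖f‖_{p,w}, where ω^r_φ(f, A, t)_{p,w} = Ω^r_φ(f, A, t)_{p,w} + ∑_{j=1}^M E_r(f)_{L^p(Z^j_{2A,t}), w}, and c depends only on r, p, A and the weight w. -/

import Mathlib

open MeasureTheory

noncomputable def phiw (x : ℝ) : ℝ := Real.sqrt (1 - x^2)

noncomputable def rho (h x : ℝ) : ℝ := h * phiw x + h^2

noncomputable def wInt (w : ℝ → ℝ) (a b : ℝ) : ℝ :=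
  ∫ u in Set.Icc a b ∩ Set.Icc (-1:ℝ) 1, w u

def IsDoubling (w : ℝ → ℝ) (L : ℝ) : Prop :=
  (∀ x, 0 ≤ w x) ∧ IntegrableOn w (Set.Icc (-1:ℝ) 1) ∧
  (0 < ∫ u in Set.Icc (-1:ℝ) 1, w u) ∧
  ∀ a b : ℝ, -1 ≤ a → a ≤ b → b ≤ 1 →
    wInt w ((a+b)/2 - (b-a)) ((a+b)/2 + (b-a)) ≤ L * wInt w a b

/-- The class `W(Z)`: `w(x) ≍ w(y)` whenever `|x-y| ≤ ρ(ε,x)` and `[x,y]` stays at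
distance `≥ ρ(ε,z_j)` from every `z_j`. -/
def WClass (M : ℕ) (z : Fin M → ℝ) (w : ℝ → ℝ) : Prop :=
  ∃ cs : ℝ, 0 < cs ∧ ∀ ε : ℝ, 0 < ε → ∀ x y : ℝ,
    x ∈ Set.Icc (-1:ℝ) 1 → y ∈ Set.Icc (-1:ℝ) 1 → |x - y| ≤ rho ε x →
    (∀ j, ∀ u ∈ Set.uIcc x y, rho ε (z j) ≤ |u - z j|) →
    cs * w y ≤ w x ∧ w x ≤ cs⁻¹ * w y

open Classical in
noncomputable def sdiffR (r : ℕ) (h : ℝ) (f : ℝ → ℝ) (x : ℝ) (S : Set ℝ) : ℝ :=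
  if Set.Icc (x - r * h / 2) (x + r * h / 2) ⊆ S then
    ∑ i ∈ Finset.range (r+1), (r.choose i : ℝ) * (-1)^(r - i) * f (x - r * h / 2 + i * h)
  else 0

/-- The weighted `L^p` (quasi)norm of `g` on `S`. -/
noncomputable def wNorm (p : ℝ) (w : ℝ → ℝ) (S : Set ℝ) (g : ℝ → ℝ) : ℝ :=
  (∫ x in S, |g x| ^ p * w x) ^ (1/p)

def ISet (M : ℕ) (z : Fin M → ℝ) (A h : ℝ) : Set ℝ :=
  {x | x ∈ Set.Icc (-1:ℝ) 1 ∧ ∀ j, A * rho h (z j) ≤ |x - z j|}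

def ZSet (M : ℕ) (z : Fin M → ℝ) (j : Fin M) (A h : ℝ) : Set ℝ :=
  {x | x ∈ Set.Icc (-1:ℝ) 1 ∧ |x - z j| ≤ A * rho h (z j)}

/-- The main part weighted modulus of smoothness `Ω_φ^r(f, A, t)_{p,w}`. -/
noncomputable def OmegaMod (r : ℕ) (p : ℝ) (w : ℝ → ℝ) (M : ℕ) (z : Fin M → ℝ)
    (A t : ℝ) (f : ℝ → ℝ) : ℝ :=
  ⨆ h : Set.Ioc (0:ℝ) t,
    wNorm p w (ISet M z A (h:ℝ))
      (fun x => sdiffR r ((h:ℝ) * phiw x) f x (ISet M z A (h:ℝ)))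

/-- Best weighted polynomial approximation `E_r(f)_{L^p(S),w}` by degree `< r`. -/
noncomputable def Er (r : ℕ) (p : ℝ) (w : ℝ → ℝ) (S : Set ℝ) (f : ℝ → ℝ) : ℝ :=
  ⨅ q : {q : Polynomial ℝ // q.degree < (r : WithBot ℕ)},
    wNorm p w S (fun x => f x - (q : Polynomial ℝ).eval x)

/-- The complete weighted modulus `ω_φ^r(f, A, t)_{p,w}`. -/
noncomputable def omegaMod (r : ℕ) (p : ℝ) (w : ℝ → ℝ) (M : ℕ) (z : Fin M → ℝ)
    (A t : ℝ) (f : ℝ → ℝ) : ℝ :=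
  OmegaMod r p w M z A t f + ∑ j : Fin M, Er r p w (ZSet M z j (2*A) t) f


/-!
The `E_r` terms are bounded by the zero polynomial. For the main part fix `h`, put `b = r h / 2`
and write the nodes of `Δ^r_{hφ(x)}` as `x + c φ(x)` with `|c| ≤ b`. A nonzero restricted
difference at `x` forces `[x - b φ(x), x + b φ(x)] ⊆ I_{A,h} ⊆ [-1, 1]`, which confines `x` to an
interval on which every node map `x ↦ x + c φ(x)` has derivative `≥ 1/2`; a change of variables
then bounds the contribution of each node by `‖f‖_{p,w}^p`. The weight at `x` is compared with
the weight at a node by walking between them in `⌈π r / (2 min(A, 1))⌉` equal steps of the angle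
`arccos`: each step has length `≤ ρ(min(A, 1) h, ·)` and stays in `I_{A,h}`, where (1.1) applies
with `ε = min(A, 1) h`.
-/

open Real Set

lemma phiw_nonneg (x : ℝ) : 0 ≤ phiw x := sqrt_nonneg _

lemma phiw_sq {x : ℝ} (hx : |x| ≤ 1) : phiw x ^ 2 = 1 - x ^ 2 :=
  sq_sqrt (by nlinarith [abs_nonneg x, sq_abs x])

lemma abs_lt_one_of_phiw_pos {x : ℝ} (hx : 0 < phiw x) : |x| < 1 := by
  have := sqrt_pos.1 hx
  nlinarith [abs_nonneg x, sq_abs x]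

lemma hasDerivAt_phiw {x : ℝ} (hx : |x| < 1) : HasDerivAt phiw (-x / phiw x) x := by
  have hx2 : 1 - x ^ 2 ≠ 0 := by nlinarith [abs_nonneg x, sq_abs x]
  have h := ((hasDerivAt_pow 2 x).const_sub 1).sqrt hx2
  convert h using 1
  · rfl
  · rw [phiw]; push_cast; field_simp

lemma abs_cos_sub_cos_le_abs_sin_mul_add_sq (a b : ℝ) :
    |cos a - cos b| ≤ |a - b| * |sin a| + |a - b| ^ 2 / 2 := by
  obtain ⟨τ, rfl⟩ : ∃ τ, b = a + τ := ⟨b - a, by ring⟩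
  rw [cos_add, show a - (a + τ) = -τ by ring, abs_neg, sq_abs]
  have hcos : |cos a * (1 - cos τ)| ≤ τ ^ 2 / 2 := by
    rw [abs_mul, abs_of_nonneg (sub_nonneg.2 (cos_le_one τ))]
    nlinarith [abs_cos_le_one a, one_sub_sq_div_two_le_cos (x := τ), abs_nonneg (cos a),
      cos_le_one τ]
  have hsin : |sin a * sin τ| ≤ |τ| * |sin a| := by
    rw [abs_mul, mul_comm]
    exact mul_le_mul_of_nonneg_right abs_sin_le_abs (abs_nonneg _)
  calc |cos a - (cos a * cos τ - sin a * sin τ)| = |sin a * sin τ + cos a * (1 - cos τ)| := by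
        ring_nf
    _ ≤ |τ| * |sin a| + τ ^ 2 / 2 := (abs_add_le _ _).trans (add_le_add hsin hcos)

lemma abs_le_pi_mul_abs_sin_half {u : ℝ} (hu : |u| ≤ π) : |u| ≤ π * |sin (u / 2)| := by
  have hsin : sin (|u| / 2) ≤ |sin (u / 2)| := by
    rcases abs_choice u with h | h <;> rw [h]
    · exact le_abs_self _
    · rw [neg_div, sin_neg]; exact neg_le_abs _
  have hJordan := mul_le_sin (x := |u| / 2) (by positivity) (by linarith)
  calc |u| = π * (2 / π * (|u| / 2)) := by field_simp
    _ ≤ π * |sin (u / 2)| := by gcongr; exact hJordan.trans hsin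

lemma abs_arccos_sub_arccos_le {x y b : ℝ} (hx : x ∈ Icc (-1 : ℝ) 1) (hy : y ∈ Icc (-1 : ℝ) 1)
    (hφ : 0 < phiw x) (hxy : |x - y| ≤ b * phiw x) : |arccos x - arccos y| ≤ π * b := by
  have hθ : arccos x ∈ Icc 0 π := ⟨arccos_nonneg x, arccos_le_pi x⟩
  have hη : arccos y ∈ Icc 0 π := ⟨arccos_nonneg y, arccos_le_pi y⟩
  have hmid : phiw x / 2 ≤ sin ((arccos x + arccos y) / 2) := by
    have h := strictConcaveOn_sin_Icc.concaveOn.2 hθ hη (by norm_num : (0 : ℝ) ≤ 1 / 2)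
      (by norm_num : (0 : ℝ) ≤ 1 / 2) (by norm_num)
    have := sin_nonneg_of_nonneg_of_le_pi hη.1 hη.2
    rw [show phiw x = sin (arccos x) from (sin_arccos x).symm]
    simp only [smul_eq_mul] at h
    convert (by linarith : sin (arccos x) / 2 ≤ sin (1 / 2 * arccos x + 1 / 2 * arccos y))
      using 2
    ring
  have hdiff : |x - y| =
      2 * sin ((arccos x + arccos y) / 2) * |sin ((arccos x - arccos y) / 2)| := by
    conv_lhs => rw [← cos_arccos hx.1 hx.2, ← cos_arccos hy.1 hy.2]
    rw [cos_sub_cos, abs_mul, abs_mul,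
      abs_of_nonneg (a := sin ((arccos x + arccos y) / 2)) (by linarith [phiw_nonneg x])]
    norm_num
  have hπ : |arccos x - arccos y| ≤ π := abs_sub_le_iff.2 ⟨by linarith [hθ.2, hη.1], by
    linarith [hθ.1, hη.2]⟩
  have key : phiw x * |arccos x - arccos y| ≤ phiw x * (π * b) :=
    calc phiw x * |arccos x - arccos y|
        ≤ phiw x * (π * |sin ((arccos x - arccos y) / 2)|) := by
          gcongr; exact abs_le_pi_mul_abs_sin_half hπ
      _ ≤ π * |x - y| := by
          rw [hdiff]
          nlinarith [mul_le_mul_of_nonneg_right hmid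
            (mul_nonneg pi_pos.le (abs_nonneg (sin ((arccos x - arccos y) / 2))))]
      _ ≤ phiw x * (π * b) := by nlinarith [mul_le_mul_of_nonneg_left hxy pi_pos.le]
  exact le_of_mul_le_mul_left key hφ

lemma abs_sub_cos_arccos_add_le_rho {x τ ε : ℝ} (hx : x ∈ Icc (-1 : ℝ) 1) (hτ : |τ| ≤ ε) :
    |x - cos (arccos x + τ)| ≤ rho ε x := by
  have h := abs_cos_sub_cos_le_abs_sin_mul_add_sq (arccos x) (arccos x + τ)
  rw [cos_arccos hx.1 hx.2, sin_arccos, show arccos x - (arccos x + τ) = -τ by ring,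
    abs_neg, abs_of_nonneg (sqrt_nonneg _)] at h
  have hτ2 : |τ| ^ 2 ≤ ε ^ 2 := pow_le_pow_left₀ (abs_nonneg τ) hτ 2
  unfold rho phiw
  nlinarith [sqrt_nonneg (1 - x ^ 2), abs_nonneg τ]

lemma arccos_add_mul_sub_mem_Icc_and_cos_mem_uIcc {x y t : ℝ} (hx : x ∈ Icc (-1 : ℝ) 1)
    (hy : y ∈ Icc (-1 : ℝ) 1) (ht : t ∈ Icc (0 : ℝ) 1) :
    arccos x + t * (arccos y - arccos x) ∈ Icc 0 π ∧
      cos (arccos x + t * (arccos y - arccos x)) ∈ uIcc x y := by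
  have hsub : uIcc (arccos x) (arccos y) ⊆ Icc 0 π :=
    uIcc_subset_Icc ⟨arccos_nonneg x, arccos_le_pi x⟩ ⟨arccos_nonneg y, arccos_le_pi y⟩
  have hθ := (convex_uIcc (arccos x) (arccos y)).add_smul_sub_mem left_mem_uIcc right_mem_uIcc ht
  rw [smul_eq_mul] at hθ
  refine ⟨hsub hθ, ?_⟩
  have := (strictAntiOn_cos.antitoneOn.mono hsub).mapsTo_uIcc hθ
  rwa [cos_arccos hx.1 hx.2, cos_arccos hy.1 hy.2] at this

lemma le_pow_mul_of_abs_arccos_sub_le {w : ℝ → ℝ} {T : Set ℝ} {β ε : ℝ} (hβ : 0 ≤ β)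
    (hstep : ∀ x y, x ∈ Icc (-1 : ℝ) 1 → y ∈ Icc (-1 : ℝ) 1 → |x - y| ≤ rho ε x →
      uIcc x y ⊆ T → w x ≤ β * w y) :
    ∀ (N : ℕ) (x y : ℝ), x ∈ Icc (-1 : ℝ) 1 → y ∈ Icc (-1 : ℝ) 1 →
      |arccos x - arccos y| ≤ N * ε → uIcc x y ⊆ T → w x ≤ β ^ N * w y := by
  intro N
  induction N with
  | zero =>
    intro x y hx hy hθ _
    have hxy : x = y := arccos_injOn hx hy (by simpa [sub_eq_zero] using hθ)
    simp [hxy]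
  | succ N ih =>
    intro x y hx hy hθ hT
    have hN : (0 : ℝ) < N + 1 := by positivity
    obtain ⟨hθv, hv⟩ := arccos_add_mul_sub_mem_Icc_and_cos_mem_uIcc hx hy
      (t := 1 / (N + 1)) ⟨by positivity, by rw [div_le_one hN]; linarith⟩
    set τ := 1 / (N + 1) * (arccos y - arccos x) with hτ_def
    set v := cos (arccos x + τ)
    have hvI : v ∈ Icc (-1 : ℝ) 1 := ⟨neg_one_le_cos _, cos_le_one _⟩
    have hτ : |τ| ≤ ε := by
      rw [hτ_def, abs_mul, abs_of_pos (by positivity), abs_sub_comm, one_div_mul_eq_div,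
        div_le_iff₀ hN]
      push_cast at hθ; linarith
    have hvy : |arccos v - arccos y| ≤ N * ε := by
      rw [arccos_cos hθv.1 hθv.2, show arccos x + τ - arccos y = -(N * τ) by
        rw [hτ_def]; field_simp; ring, abs_neg, abs_mul, Nat.abs_cast]
      gcongr
    calc w x ≤ β * w v := hstep x v hx hvI (abs_sub_cos_arccos_add_le_rho hx hτ)
          ((uIcc_subset_uIcc_left hv).trans hT)
      _ ≤ β * (β ^ N * w y) := by
          gcongr; exact ih v y hvI hy hvy ((uIcc_subset_uIcc_right hv).trans hT)
      _ = β ^ (N + 1) * w y := by ring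

lemma rho_mul_le_mul_rho {A δ h : ℝ} (x : ℝ) (hδ : 0 ≤ δ) (hδA : δ ≤ A) (hδ1 : δ ≤ 1)
    (hh : 0 ≤ h) : rho (δ * h) x ≤ A * rho h x := by
  unfold rho
  have hδ2 : δ * δ ≤ 1 * A := mul_le_mul hδ1 hδA hδ zero_le_one
  nlinarith [mul_le_mul_of_nonneg_right hδA (mul_nonneg hh (phiw_nonneg x)),
    mul_le_mul_of_nonneg_right hδ2 (sq_nonneg h)]

lemma weight_le_pow_mul_of_uIcc_subset_ISet {M : ℕ} {z : Fin M → ℝ} {w : ℝ → ℝ} {cs : ℝ}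
    (hcs : 0 < cs)
    (hwZ : ∀ ε : ℝ, 0 < ε → ∀ x y : ℝ, x ∈ Icc (-1 : ℝ) 1 → y ∈ Icc (-1 : ℝ) 1 →
      |x - y| ≤ rho ε x → (∀ j, ∀ u ∈ uIcc x y, rho ε (z j) ≤ |u - z j|) →
      cs * w y ≤ w x ∧ w x ≤ cs⁻¹ * w y)
    {A h b : ℝ} (hA : 0 < A) (hh : 0 < h) {N : ℕ} (hN : π * b ≤ N * (min A 1 * h))
    {x y : ℝ} (hx : x ∈ Icc (-1 : ℝ) 1) (hy : y ∈ Icc (-1 : ℝ) 1) (hφ : 0 < phiw x)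
    (hxy : |x - y| ≤ b * phiw x) (hS : uIcc x y ⊆ ISet M z A h) : w x ≤ cs⁻¹ ^ N * w y := by
  refine le_pow_mul_of_abs_arccos_sub_le (inv_nonneg.2 hcs.le) (fun x' y' hx' hy' hρ hT => ?_) N
    x y hx hy ((abs_arccos_sub_arccos_le hx hy hφ hxy).trans hN) hS
  refine (hwZ _ (mul_pos (lt_min hA one_pos) hh) x' y' hx' hy' hρ fun j u hu => ?_).2
  exact (rho_mul_le_mul_rho _ (le_min hA.le zero_le_one) (min_le_left _ _) (min_le_right _ _)
    hh.le).trans ((hT hu).2 j)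

/-- For `b > 0`, the points `x ∈ (-1, 1)` with `[x - b φ(x), x + b φ(x)] ⊆ [-1, 1]`. -/
def stepDomain (b : ℝ) : Set ℝ := Icc (-((1 - b ^ 2) / (1 + b ^ 2))) ((1 - b ^ 2) / (1 + b ^ 2))

lemma measurableSet_stepDomain {b : ℝ} : MeasurableSet (stepDomain b) := measurableSet_Icc

lemma abs_le_one_of_mem_stepDomain {b x : ℝ} (hx : x ∈ stepDomain b) : |x| ≤ 1 :=
  (abs_le.2 hx).trans ((div_le_one (by positivity)).2 (by nlinarith [sq_nonneg b]))

lemma mul_one_add_abs_le_phiw {b x : ℝ} (hx : x ∈ stepDomain b) :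
    b * (1 + |x|) ≤ phiw x := by
  have h : |x| * (1 + b ^ 2) ≤ 1 - b ^ 2 := (le_div_iff₀ (by positivity)).1 (abs_le.2 hx)
  have hx1 := abs_le_one_of_mem_stepDomain hx
  refine (le_abs_self _).trans (abs_le_sqrt ?_)
  nlinarith [sq_abs x, abs_nonneg x]

lemma phiw_pos_of_mem_stepDomain {b x : ℝ} (hb : 0 < b) (hx : x ∈ stepDomain b) :
    0 < phiw x :=
  lt_of_lt_of_le (by positivity) (mul_one_add_abs_le_phiw hx)

lemma mem_stepDomain {b x : ℝ} (hb : 0 ≤ b) (hφ : 0 < phiw x) (h₁ : -1 ≤ x - b * phiw x)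
    (h₂ : x + b * phiw x ≤ 1) : x ∈ stepDomain b := by
  have hx1 := abs_lt_one_of_phiw_pos hφ
  have hbφ : b * phiw x ≤ 1 - |x| := by
    rcases abs_cases x with ⟨h, _⟩ | ⟨h, _⟩ <;> rw [h] <;> linarith
  have hsq : (b * phiw x) ^ 2 = b ^ 2 * (1 + |x|) * (1 - |x|) := by
    rw [mul_pow, phiw_sq hx1.le]; linear_combination b ^ 2 * sq_abs x
  have h3 : b ^ 2 * (1 + |x|) ≤ 1 - |x| := by
    have := pow_le_pow_left₀ (by positivity) hbφ 2
    rw [hsq, sq (1 - |x|)] at this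
    exact le_of_mul_le_mul_right this (by linarith)
  exact abs_le.1 ((le_div_iff₀ (by positivity)).2 (by linarith))

lemma add_mul_phiw_mem_Icc {b c x : ℝ} (hc : |c| ≤ b) (hx : x ∈ stepDomain b) :
    x + c * phiw x ∈ Icc (-1 : ℝ) 1 := by
  have h := mul_one_add_abs_le_phiw hx
  have hx1 := abs_le_one_of_mem_stepDomain hx
  have hφ := phiw_nonneg x
  have hbφ : b * phiw x ≤ 1 - |x| := by
    have : b * phiw x * (1 + |x|) ≤ (1 - |x|) * (1 + |x|) := by
      nlinarith [phiw_sq hx1, sq_abs x]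
    exact le_of_mul_le_mul_right this (by positivity)
  have hcφ : |c * phiw x| ≤ b * phiw x := by
    rw [abs_mul, abs_of_nonneg hφ]; gcongr
  exact abs_le.1 ((abs_add_le _ _).trans (by linarith))

lemma hasDerivAt_add_mul_phiw (c : ℝ) {x : ℝ} (hx : |x| < 1) :
    HasDerivAt (fun y => y + c * phiw y) (1 - c * x / phiw x) x :=
  ((hasDerivAt_id' x).add ((hasDerivAt_phiw hx).const_mul c)).congr_deriv (by ring)

lemma one_half_le_one_sub_mul_div_phiw {b c x : ℝ} (hb : 0 < b) (hc : |c| ≤ b)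
    (hx : x ∈ stepDomain b) : 1 / 2 ≤ 1 - c * x / phiw x := by
  have h := mul_one_add_abs_le_phiw hx
  have hx1 := abs_le_one_of_mem_stepDomain hx
  have hcx : |c * x| ≤ phiw x / 2 := by
    rw [abs_mul]; nlinarith [abs_nonneg c, abs_nonneg x]
  have : c * x / phiw x ≤ 1 / 2 := by
    rw [div_le_iff₀ (phiw_pos_of_mem_stepDomain hb hx)]; linarith [le_abs_self (c * x)]
  linarith

lemma integrableOn_and_setIntegral_abs_deriv_mul_comp_le {ψ ψ' g : ℝ → ℝ} {s t : Set ℝ}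
    (hs : MeasurableSet s) (hψ : ∀ x ∈ s, HasDerivWithinAt ψ (ψ' x) s x) (hinj : InjOn ψ s)
    (hst : MapsTo ψ s t) (hg0 : ∀ x, 0 ≤ g x) (hg : IntegrableOn g t) :
    IntegrableOn (fun x => |ψ' x| * g (ψ x)) s ∧
      ∫ x in s, |ψ' x| * g (ψ x) ≤ ∫ x in t, g x := by
  have hint := (integrableOn_image_iff_integrableOn_abs_deriv_smul hs hψ hinj g).1
    (hg.mono_set hst.image_subset)
  simp only [smul_eq_mul] at hint
  refine ⟨hint, ?_⟩
  calc ∫ x in s, |ψ' x| * g (ψ x) = ∫ x in ψ '' s, g x := by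
        simpa only [smul_eq_mul] using (integral_image_eq_integral_abs_deriv_smul hs hψ hinj g).symm
    _ ≤ ∫ x in t, g x :=
        setIntegral_mono_set hg (ae_of_all _ hg0) (LE.le.eventuallyLE hst.image_subset)

lemma integrableOn_and_setIntegral_comp_add_mul_phiw_le {b c : ℝ} (hb : 0 < b) (hc : |c| ≤ b)
    {g : ℝ → ℝ} (hg0 : ∀ x, 0 ≤ g x) (hg : IntegrableOn g (Icc (-1 : ℝ) 1)) :
    IntegrableOn (fun x => |1 - c * x / phiw x| * g (x + c * phiw x)) (stepDomain b) ∧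
      ∫ x in stepDomain b, |1 - c * x / phiw x| * g (x + c * phiw x) ≤
        ∫ x in Icc (-1 : ℝ) 1, g x := by
  have hder : ∀ x ∈ stepDomain b,
      HasDerivAt (fun y => y + c * phiw y) (1 - c * x / phiw x) x := fun x hx =>
    hasDerivAt_add_mul_phiw c (abs_lt_one_of_phiw_pos (phiw_pos_of_mem_stepDomain hb hx))
  have hmono : StrictMonoOn (fun y => y + c * phiw y) (stepDomain b) :=
    strictMonoOn_of_hasDerivWithinAt_pos (convex_Icc _ _)
      (by unfold phiw; fun_prop)
      (fun x hx => (hder x (interior_subset hx)).hasDerivWithinAt)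
      (fun x hx => by linarith [one_half_le_one_sub_mul_div_phiw hb hc (interior_subset hx)])
  exact integrableOn_and_setIntegral_abs_deriv_mul_comp_le measurableSet_stepDomain
    (fun x hx => (hder x hx).hasDerivWithinAt) hmono.injOn
    (fun x hx => add_mul_phiw_mem_Icc hc hx) hg0 hg

lemma abs_sum_mul_rpow_le {ι : Type*} {p : ℝ} (hp : 0 < p) (s : Finset ι) (a b : ι → ℝ) :
    |∑ i ∈ s, a i * b i| ^ p ≤ (∑ i ∈ s, |a i|) ^ p * ∑ i ∈ s, |b i| ^ p := by
  rcases s.eq_empty_or_nonempty with rfl | hs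
  · simp [zero_rpow hp.ne']
  obtain ⟨j, hj, hmax⟩ := s.exists_max_image (fun i => |b i|) hs
  have hsum : |∑ i ∈ s, a i * b i| ≤ (∑ i ∈ s, |a i|) * |b j| :=
    calc |∑ i ∈ s, a i * b i| ≤ ∑ i ∈ s, |a i| * |b i| := by
          simpa only [abs_mul] using Finset.abs_sum_le_sum_abs (fun i => a i * b i) s
      _ ≤ ∑ i ∈ s, |a i| * |b j| :=
          Finset.sum_le_sum fun i hi => mul_le_mul_of_nonneg_left (hmax i hi) (abs_nonneg _)
      _ = (∑ i ∈ s, |a i|) * |b j| := (Finset.sum_mul _ _ _).symm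
  calc |∑ i ∈ s, a i * b i| ^ p ≤ ((∑ i ∈ s, |a i|) * |b j|) ^ p :=
        rpow_le_rpow (abs_nonneg _) hsum hp.le
    _ = (∑ i ∈ s, |a i|) ^ p * |b j| ^ p :=
        mul_rpow (Finset.sum_nonneg fun i _ => abs_nonneg _) (abs_nonneg _)
    _ ≤ (∑ i ∈ s, |a i|) ^ p * ∑ i ∈ s, |b i| ^ p := by
        gcongr
        exact Finset.single_le_sum (f := fun i => |b i| ^ p) (fun i _ => by positivity) hj

lemma abs_sub_half_mul_le {r i : ℕ} (hi : i ∈ Finset.range (r + 1)) {h : ℝ} (hh : 0 ≤ h) :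
    |((i : ℝ) - r / 2) * h| ≤ r * h / 2 := by
  have hir : (i : ℝ) ≤ r := by exact_mod_cast Nat.lt_succ_iff.1 (Finset.mem_range.1 hi)
  exact abs_le.2 ⟨by nlinarith [i.cast_nonneg (α := ℝ)], by nlinarith⟩

lemma abs_sdiffR_rpow_le {p : ℝ} (hp : 0 < p) (r : ℕ) (H : ℝ) (f : ℝ → ℝ) (x : ℝ) (S : Set ℝ) :
    |sdiffR r H f x S| ^ p ≤
      (2 ^ r) ^ p * ∑ i ∈ Finset.range (r + 1), |f (x + ((i : ℝ) - r / 2) * H)| ^ p := by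
  unfold sdiffR
  split_ifs
  · have h := abs_sum_mul_rpow_le hp (Finset.range (r + 1))
      (fun i => (r.choose i : ℝ) * (-1) ^ (r - i)) (fun i => f (x - r * H / 2 + i * H))
    have hcoef : ∑ i ∈ Finset.range (r + 1), |(r.choose i : ℝ) * (-1) ^ (r - i)| = 2 ^ r := by
      simp only [abs_mul, abs_pow, abs_neg, abs_one, one_pow, mul_one, Nat.abs_cast]
      exact_mod_cast Nat.sum_range_choose r
    rw [hcoef] at h
    convert h using 6 with i
    ring
  · rw [abs_zero, zero_rpow hp.ne']
    positivity

lemma sdiffR_zero_step {r : ℕ} (hr : 1 ≤ r) (f : ℝ → ℝ) (x : ℝ) (S : Set ℝ) :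
    sdiffR r 0 f x S = 0 := by
  unfold sdiffR
  split_ifs
  · have h := add_pow (1 : ℝ) (-1) r
    simp only [one_pow, one_mul, add_neg_cancel, zero_pow (by omega : r ≠ 0)] at h
    simp only [mul_zero, zero_div, sub_zero, add_zero, ← Finset.sum_mul]
    rw [Finset.sum_congr rfl fun i _ => mul_comm _ _, ← h, zero_mul]
  · rfl

lemma guard_subset_and_mem_stepDomain_of_sdiffR_ne_zero {S : Set ℝ} (hS : S ⊆ Icc (-1 : ℝ) 1)
    {r : ℕ} (hr : 1 ≤ r) {h : ℝ} (hh : 0 < h) {f : ℝ → ℝ} {x : ℝ}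
    (hne : sdiffR r (h * phiw x) f x S ≠ 0) :
    Icc (x - r * (h * phiw x) / 2) (x + r * (h * phiw x) / 2) ⊆ S ∧
      x ∈ stepDomain (r * h / 2) := by
  have hguard : Icc (x - r * (h * phiw x) / 2) (x + r * (h * phiw x) / 2) ⊆ S := by
    by_contra hg
    exact hne (by simp only [sdiffR, hg, if_false])
  have hφ : 0 < phiw x := (phiw_nonneg x).lt_of_ne fun h0 =>
    hne (by rw [← h0, mul_zero, sdiffR_zero_step hr])
  have hd : 0 ≤ r * (h * phiw x) / 2 := by positivity
  have h₁ := (hS (hguard ⟨le_rfl, by linarith⟩)).1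
  have h₂ := (hS (hguard ⟨by linarith, le_rfl⟩)).2
  exact ⟨hguard, mem_stepDomain (by positivity) hφ (by linarith) (by linarith)⟩

/-- `∑ᵢ |ψᵢ'(x)| g(ψᵢ(x))` over the nodes `ψᵢ(x) = x + (i - r/2) h φ(x)` of `Δ^r_{hφ(x)}`. -/
noncomputable def nodeSum (r : ℕ) (h : ℝ) (g : ℝ → ℝ) (x : ℝ) : ℝ :=
  ∑ i ∈ Finset.range (r + 1),
    |1 - ((i : ℝ) - r / 2) * h * x / phiw x| * g (x + ((i : ℝ) - r / 2) * h * phiw x)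

lemma integrableOn_and_setIntegral_nodeSum_le {r : ℕ} {h : ℝ} (hb : 0 < (r : ℝ) * h / 2)
    (hh : 0 ≤ h) {g : ℝ → ℝ} (hg0 : ∀ x, 0 ≤ g x) (hg : IntegrableOn g (Icc (-1 : ℝ) 1)) :
    IntegrableOn (nodeSum r h g) (stepDomain (r * h / 2)) ∧
      ∫ x in stepDomain (r * h / 2), nodeSum r h g x ≤ (r + 1) * ∫ x in Icc (-1 : ℝ) 1, g x := by
  have hnode : ∀ i ∈ Finset.range (r + 1), _ := fun i hi =>
    integrableOn_and_setIntegral_comp_add_mul_phiw_le hb (abs_sub_half_mul_le hi hh) hg0 hg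
  refine ⟨integrable_finsetSum _ fun i hi => (hnode i hi).1, ?_⟩
  unfold nodeSum
  rw [integral_finsetSum _ fun i hi => (hnode i hi).1]
  refine (Finset.sum_le_sum fun i hi => (hnode i hi).2).trans_eq ?_
  rw [Finset.sum_const, Finset.card_range, nsmul_eq_mul]
  push_cast; ring

lemma weight_le_mul_abs_deriv_mul_weight {S : Set ℝ} {w : ℝ → ℝ} (hw0 : ∀ x, 0 ≤ w x) {b c C x : ℝ}
    (hb : 0 < b) (hc : |c| ≤ b) (hx : x ∈ stepDomain b)
    (hguard : Icc (x - b * phiw x) (x + b * phiw x) ⊆ S)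
    (hwS : ∀ y ∈ Icc (-1 : ℝ) 1, |x - y| ≤ b * phiw x → uIcc x y ⊆ S → w x ≤ C * w y) :
    w x ≤ 2 * C * (|1 - c * x / phiw x| * w (x + c * phiw x)) := by
  have hcφ : |c * phiw x| ≤ b * phiw x := by
    rw [abs_mul, abs_of_nonneg (phiw_nonneg x)]
    exact mul_le_mul_of_nonneg_right hc (phiw_nonneg x)
  have hxψ : |x - (x + c * phiw x)| ≤ b * phiw x := by rwa [sub_add_cancel_left, abs_neg]
  have hseg : uIcc x (x + c * phiw x) ⊆ S := by
    have hd : 0 ≤ b * phiw x := mul_nonneg hb.le (phiw_nonneg x)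
    have := abs_le.1 hcφ
    exact (uIcc_subset_Icc ⟨by linarith, by linarith⟩ ⟨by linarith, by linarith⟩).trans hguard
  have hw := hwS _ (add_mul_phiw_mem_Icc hc hx) hxψ hseg
  have hCw : 0 ≤ C * w (x + c * phiw x) := (hw0 x).trans hw
  have hd := one_half_le_one_sub_mul_div_phiw hb hc hx
  calc w x ≤ C * w (x + c * phiw x) := hw
    _ ≤ C * w (x + c * phiw x) * (2 * |1 - c * x / phiw x|) :=
        le_mul_of_one_le_right hCw (by linarith [le_abs_self (1 - c * x / phiw x)])
    _ = _ := by ring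

lemma abs_sdiffR_rpow_mul_le {S : Set ℝ} {w f : ℝ → ℝ} (hw0 : ∀ x, 0 ≤ w x) {p : ℝ}
    (hp : 0 < p) {r : ℕ} (hr : 1 ≤ r) {h C x : ℝ} (hh : 0 < h) (hx : x ∈ stepDomain (r * h / 2))
    (hguard : Icc (x - r * (h * phiw x) / 2) (x + r * (h * phiw x) / 2) ⊆ S)
    (hwS : ∀ y ∈ Icc (-1 : ℝ) 1, |x - y| ≤ r * h / 2 * phiw x → uIcc x y ⊆ S →
      w x ≤ C * w y) :
    |sdiffR r (h * phiw x) f x S| ^ p * w x ≤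
      2 * (2 ^ r) ^ p * C * nodeSum r h (fun u => |f u| ^ p * w u) x := by
  have hb : 0 < (r : ℝ) * h / 2 := by
    have : (0 : ℝ) < r := by exact_mod_cast hr
    positivity
  have hguard' : Icc (x - r * h / 2 * phiw x) (x + r * h / 2 * phiw x) ⊆ S := by
    convert hguard using 2 <;> ring
  have hΔ := abs_sdiffR_rpow_le hp r (h * phiw x) f x S
  simp only [← mul_assoc] at hΔ
  calc |sdiffR r (h * phiw x) f x S| ^ p * w x
      ≤ (2 ^ r) ^ p * ∑ i ∈ Finset.range (r + 1),
          |f (x + ((i : ℝ) - r / 2) * h * phiw x)| ^ p * w x := by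
        rw [← Finset.sum_mul, ← mul_assoc]
        exact mul_le_mul_of_nonneg_right hΔ (hw0 x)
    _ ≤ (2 ^ r) ^ p * ∑ i ∈ Finset.range (r + 1),
          |f (x + ((i : ℝ) - r / 2) * h * phiw x)| ^ p *
            (2 * C * (|1 - ((i : ℝ) - r / 2) * h * x / phiw x| *
              w (x + ((i : ℝ) - r / 2) * h * phiw x))) := by
        gcongr with i hi
        exact weight_le_mul_abs_deriv_mul_weight hw0 hb (abs_sub_half_mul_le hi hh.le) hx
          hguard' hwS
    _ = _ := by unfold nodeSum; rw [Finset.mul_sum, Finset.mul_sum]; congr 1 with i; ring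

lemma integral_abs_sdiffR_rpow_mul_le {S : Set ℝ} (hSm : MeasurableSet S)
    (hS : S ⊆ Icc (-1 : ℝ) 1) {w f : ℝ → ℝ} (hw0 : ∀ x, 0 ≤ w x) {p : ℝ} (hp : 0 < p) {r : ℕ}
    (hr : 1 ≤ r) {h C : ℝ} (hh : 0 < h) (hC : 0 ≤ C)
    (hwS : ∀ x ∈ stepDomain (r * h / 2), ∀ y ∈ Icc (-1 : ℝ) 1, |x - y| ≤ r * h / 2 * phiw x →
      uIcc x y ⊆ S → w x ≤ C * w y)
    (hf : IntegrableOn (fun x => |f x| ^ p * w x) (Icc (-1 : ℝ) 1)) :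
    ∫ x in S, |sdiffR r (h * phiw x) f x S| ^ p * w x ≤
      2 * (2 ^ r) ^ p * C * (r + 1) * ∫ x in Icc (-1 : ℝ) 1, |f x| ^ p * w x := by
  have hb : 0 < (r : ℝ) * h / 2 := by
    have : (0 : ℝ) < r := by exact_mod_cast hr
    positivity
  set g : ℝ → ℝ := fun u => |f u| ^ p * w u
  have hg0 : ∀ u, 0 ≤ g u := fun u => mul_nonneg (by positivity) (hw0 u)
  obtain ⟨hGint, hGle⟩ := integrableOn_and_setIntegral_nodeSum_le hb hh.le hg0 hf
  set K := 2 * (2 ^ r) ^ p * C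
  have hK : 0 ≤ K := by positivity
  let H := (stepDomain (r * h / 2)).indicator fun x => K * nodeSum r h g x
  have hH0 : ∀ x, 0 ≤ H x := fun x => indicator_nonneg (fun y _ =>
    mul_nonneg hK (Finset.sum_nonneg fun i _ => mul_nonneg (abs_nonneg _) (hg0 _))) x
  have hHint : Integrable H :=
    IntegrableOn.integrable_indicator (hGint.const_mul K) measurableSet_stepDomain
  have hpt : ∀ x ∈ S, |sdiffR r (h * phiw x) f x S| ^ p * w x ≤ H x := by
    intro x hxS
    by_cases hne : sdiffR r (h * phiw x) f x S = 0
    · rw [hne, abs_zero, zero_rpow hp.ne', zero_mul]; exact hH0 x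
    obtain ⟨hguard, hx⟩ := guard_subset_and_mem_stepDomain_of_sdiffR_ne_zero hS hr hh hne
    rw [show H x = K * nodeSum r h g x from indicator_of_mem hx _]
    exact abs_sdiffR_rpow_mul_le hw0 hp hr hh hx hguard (hwS x hx)
  calc ∫ x in S, |sdiffR r (h * phiw x) f x S| ^ p * w x ≤ ∫ x in S, H x :=
        integral_mono_of_nonneg (ae_of_all _ fun x => mul_nonneg (by positivity) (hw0 x))
          hHint.integrableOn (ae_restrict_of_forall_mem hSm hpt)
    _ ≤ ∫ x, H x := setIntegral_le_integral hHint (ae_of_all _ hH0)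
    _ = K * ∫ x in stepDomain (r * h / 2), nodeSum r h g x := by
        rw [integral_indicator measurableSet_stepDomain, integral_const_mul]
    _ ≤ K * ((r + 1) * ∫ x in Icc (-1 : ℝ) 1, g x) := by gcongr
    _ = _ := by ring

lemma wNorm_nonneg {w : ℝ → ℝ} (hw0 : ∀ x, 0 ≤ w x) (p : ℝ) (S : Set ℝ) (g : ℝ → ℝ) :
    0 ≤ wNorm p w S g :=
  rpow_nonneg (integral_nonneg fun x => mul_nonneg (by positivity) (hw0 x)) _

lemma wNorm_mono_set {w : ℝ → ℝ} (hw0 : ∀ x, 0 ≤ w x) {p : ℝ} (hp : 0 ≤ p) {S T : Set ℝ}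
    (hST : S ⊆ T) {g : ℝ → ℝ} (hg : IntegrableOn (fun x => |g x| ^ p * w x) T) :
    wNorm p w S g ≤ wNorm p w T g :=
  rpow_le_rpow (integral_nonneg fun x => mul_nonneg (by positivity) (hw0 x))
    (setIntegral_mono_set hg (ae_of_all _ fun x => mul_nonneg (by positivity) (hw0 x))
      (LE.le.eventuallyLE hST))
    (by positivity)

lemma wNorm_le_rpow_mul_of_integral_le {w : ℝ → ℝ} (hw0 : ∀ x, 0 ≤ w x) {p : ℝ} (hp : 0 < p)
    {S T : Set ℝ} {f g : ℝ → ℝ} {K : ℝ} (hK : 0 ≤ K)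
    (h : ∫ x in S, |g x| ^ p * w x ≤ K * ∫ x in T, |f x| ^ p * w x) :
    wNorm p w S g ≤ K ^ (1 / p) * wNorm p w T f := by
  unfold wNorm
  rw [← mul_rpow hK (integral_nonneg fun x => mul_nonneg (by positivity) (hw0 x))]
  exact rpow_le_rpow (integral_nonneg fun x => mul_nonneg (by positivity) (hw0 x)) h
    (one_div_pos.2 hp).le

lemma Er_le_wNorm {w : ℝ → ℝ} (hw0 : ∀ x, 0 ≤ w x) {p : ℝ} (hp : 0 ≤ p) (r : ℕ) {S T : Set ℝ}
    (hST : S ⊆ T) {f : ℝ → ℝ} (hf : IntegrableOn (fun x => |f x| ^ p * w x) T) :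
    Er r p w S f ≤ wNorm p w T f := by
  have h0 : (0 : Polynomial ℝ).degree < r := by
    rw [Polynomial.degree_zero]; exact WithBot.bot_lt_coe r
  refine (ciInf_le ⟨0, ?_⟩ ⟨0, h0⟩).trans ?_
  · rintro _ ⟨q, rfl⟩
    exact wNorm_nonneg hw0 _ _ _
  · simpa only [Polynomial.eval_zero, sub_zero] using wNorm_mono_set hw0 hp hST hf

lemma measurableSet_ISet (M : ℕ) (z : Fin M → ℝ) (A h : ℝ) : MeasurableSet (ISet M z A h) := by
  have : ISet M z A h = Icc (-1 : ℝ) 1 ∩ ⋂ j, {x | A * rho h (z j) ≤ |x - z j|} := by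
    ext x; simp [ISet]
  rw [this]
  exact measurableSet_Icc.inter (MeasurableSet.iInter fun j =>
    measurableSet_le measurable_const (by fun_prop))

lemma OmegaMod_le {M : ℕ} {z : Fin M → ℝ} {w : ℝ → ℝ} (hw0 : ∀ x, 0 ≤ w x) {cs : ℝ}
    (hcs : 0 < cs)
    (hwZ : ∀ ε : ℝ, 0 < ε → ∀ x y : ℝ, x ∈ Icc (-1 : ℝ) 1 → y ∈ Icc (-1 : ℝ) 1 →
      |x - y| ≤ rho ε x → (∀ j, ∀ u ∈ uIcc x y, rho ε (z j) ≤ |u - z j|) →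
      cs * w y ≤ w x ∧ w x ≤ cs⁻¹ * w y)
    {p : ℝ} (hp : 0 < p) {r : ℕ} (hr : 1 ≤ r) {A t : ℝ} (hA : 0 < A) (ht : 0 < t) {f : ℝ → ℝ}
    (hf : IntegrableOn (fun x => |f x| ^ p * w x) (Icc (-1 : ℝ) 1)) :
    OmegaMod r p w M z A t f ≤
      (2 * (2 ^ r) ^ p * cs⁻¹ ^ ⌈π * r / (2 * min A 1)⌉₊ * (r + 1)) ^ (1 / p) *
        wNorm p w (Icc (-1 : ℝ) 1) f := by
  have hδ : 0 < min A 1 := lt_min hA one_pos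
  have hC : 0 ≤ cs⁻¹ ^ ⌈π * r / (2 * min A 1)⌉₊ := by positivity
  have : Nonempty (Ioc 0 t) := ⟨⟨t, ht, le_rfl⟩⟩
  refine ciSup_le fun ⟨h, hh, _⟩ => wNorm_le_rpow_mul_of_integral_le hw0 hp (by positivity) ?_
  refine integral_abs_sdiffR_rpow_mul_le (measurableSet_ISet M z A h) (fun x hx => hx.1) hw0 hp
    hr hh hC (fun x hx y hy hxy hS => ?_) hf
  have hN : π * (r * h / 2) ≤ ⌈π * r / (2 * min A 1)⌉₊ * (min A 1 * h) :=
    calc π * (r * h / 2) = π * r / (2 * min A 1) * (min A 1 * h) := by field_simp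
      _ ≤ _ := by gcongr; exact Nat.le_ceil _
  have hb : 0 < (r : ℝ) * h / 2 := by
    have : (0 : ℝ) < r := by exact_mod_cast hr
    positivity
  exact weight_le_pow_mul_of_uIcc_subset_ISet hcs hwZ hA hh hN
    (abs_le.1 (abs_le_one_of_mem_stepDomain hx)) hy (phiw_pos_of_mem_stepDomain hb hx) hxy hS

theorem stmt17_general (M : ℕ) (z : Fin M → ℝ) (w : ℝ → ℝ) (L : ℝ)
    (hw : IsDoubling w L) (hwZ : WClass M z w)
    (p : ℝ) (hp : 0 < p) (r : ℕ) (hr : 1 ≤ r) (A : ℝ) (hA : 0 < A) :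
    ∃ c : ℝ, 0 < c ∧ ∀ t : ℝ, 0 < t → ∀ f : ℝ → ℝ,
      IntegrableOn (fun x => |f x| ^ p * w x) (Set.Icc (-1:ℝ) 1) →
      omegaMod r p w M z A t f ≤ c * wNorm p w (Set.Icc (-1:ℝ) 1) f := by
  obtain ⟨cs, hcs, hwZ⟩ := hwZ
  set K := 2 * (2 ^ r) ^ p * cs⁻¹ ^ ⌈π * r / (2 * min A 1)⌉₊ * (r + 1)
  have hK : 0 < K := by positivity
  refine ⟨K ^ (1 / p) + M, add_pos_of_pos_of_nonneg (rpow_pos_of_pos hK _) M.cast_nonneg,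
    fun t ht f hf => ?_⟩
  have hΩ := OmegaMod_le hw.1 hcs hwZ hp hr hA ht hf
  have hE : ∀ j, Er r p w (ZSet M z j (2 * A) t) f ≤ wNorm p w (Icc (-1 : ℝ) 1) f :=
    fun j => Er_le_wNorm hw.1 hp.le r (fun x hx => hx.1) hf
  calc omegaMod r p w M z A t f
      ≤ K ^ (1 / p) * wNorm p w (Icc (-1 : ℝ) 1) f +
          ∑ _j : Fin M, wNorm p w (Icc (-1 : ℝ) 1) f :=
        add_le_add hΩ (Finset.sum_le_sum fun j _ => hE j)
    _ = (K ^ (1 / p) + M) * wNorm p w (Icc (-1 : ℝ) 1) f := by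
        rw [Finset.sum_const, Finset.card_univ, Fintype.card_fin, nsmul_eq_mul]; ring

theorem stmt17 (M : ℕ) (hM : 1 ≤ M) (z : Fin M → ℝ) (hz : StrictMono z)
    (hzI : ∀ j, z j ∈ Set.Icc (-1:ℝ) 1) (w : ℝ → ℝ) (L : ℝ)
    (hw : IsDoubling w L) (hwZ : WClass M z w)
    (p : ℝ) (hp : 0 < p) (r : ℕ) (hr : 1 ≤ r) (A : ℝ) (hA : 0 < A) :
    ∃ c : ℝ, 0 < c ∧ ∀ t : ℝ, 0 < t → ∀ f : ℝ → ℝ,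
      IntegrableOn (fun x => |f x| ^ p * w x) (Set.Icc (-1:ℝ) 1) →
      omegaMod r p w M z A t f ≤ c * wNorm p w (Set.Icc (-1:ℝ) 1) f :=
  stmt17_general M z w L hw hwZ p hp r hr A hA
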